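/- arXiv:2109.06310 — 2 statements merged into one kernel-verified Lean document; each statement's English description precedes it below -/
import Mathlib

section
/- In a finite-horizon MDP with finite state and action spaces, let π_e and π_b be policies and θ : S → {0,1} a mapping such that for every state s with θ(s)=0 the state-action value function Q^{π_e}(s,·) is constant in the action. Then the composite policy π'(a|s) = π_e(a|s) when θ(s)=1 and π_b(a|s) when θ(s)=0 satisfies V^{π'}(s) = V^{π_e}(s) for every state s. -/
/-!
Both value functions are fixed points of the Bellman evaluation operator of the composite
policy: `V'` by hypothesis, and `Ve` because at a state with `θ s = false` the action values
of `π_e` do not depend on the action, so averaging them against `π_b` instead of `π_e` changes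
nothing. For `γ < 1` that operator is a `γ`-contraction in the sup norm, so it has at most
one fixed point.
-/

open Finset

section WeightedSum

variable {ι : Type*} [Fintype ι]

lemma abs_sum_mul_le_norm {w : ι → ℝ} (hw0 : ∀ i, 0 ≤ w i) (hw1 : ∑ i, w i = 1)
    (x : ι → ℝ) : |∑ i, w i * x i| ≤ ‖x‖ :=
  calc |∑ i, w i * x i| ≤ ∑ i, |w i * x i| := abs_sum_le_sum_abs _ _
    _ ≤ ∑ i, w i * ‖x‖ := sum_le_sum fun i _ => by
        rw [abs_mul, abs_of_nonneg (hw0 i), ← Real.norm_eq_abs]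
        exact mul_le_mul_of_nonneg_left (norm_le_pi_norm x i) (hw0 i)
    _ = ‖x‖ := by rw [← sum_mul, hw1, one_mul]

lemma sum_mul_eq_of_forall_eq {w w' x : ι → ℝ} (hw1 : ∑ i, w i = 1) (hw'1 : ∑ i, w' i = 1)
    (hx : ∀ i j, x i = x j) : ∑ i, w i * x i = ∑ i, w' i * x i := by
  have hx_avg : ∀ i, x i = ∑ j, w' j * x j := fun i => by
    simp_rw [hx _ i, ← sum_mul, hw'1, one_mul]
  calc ∑ i, w i * x i = ∑ i, w i * ∑ j, w' j * x j := sum_congr rfl fun i _ => by rw [← hx_avg]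
    _ = ∑ j, w' j * x j := by rw [← sum_mul, hw1, one_mul]

end WeightedSum

section Bellman

variable {S A : Type*} [Fintype S]

def qValue (P : S → A → S → ℝ) (R : S → A → ℝ) (γ : ℝ) (V : S → ℝ) (s : S) (a : A) : ℝ :=
  R s a + γ * ∑ s', P s a s' * V s'

lemma qValue_sub {P : S → A → S → ℝ} {R : S → A → ℝ} {γ : ℝ} (V W : S → ℝ) (s : S) (a : A) :
    qValue P R γ V s a - qValue P R γ W s a = γ * ∑ s', P s a s' * (V - W) s' := by
  simp only [qValue, Pi.sub_apply, mul_sub, sum_sub_distrib, add_sub_add_left_eq_sub]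

variable [Fintype A]

def bellmanOp (P : S → A → S → ℝ) (R : S → A → ℝ) (γ : ℝ) (π : S → A → ℝ) (V : S → ℝ) :
    S → ℝ :=
  fun s => ∑ a, π s a * qValue P R γ V s a

variable {P : S → A → S → ℝ} {R : S → A → ℝ} {γ : ℝ} {π : S → A → ℝ}

lemma bellmanOp_sub (V W : S → ℝ) (s : S) :
    (bellmanOp P R γ π V - bellmanOp P R γ π W) s
      = γ * ∑ a, π s a * ∑ s', P s a s' * (V - W) s' := by
  simp only [bellmanOp, Pi.sub_apply, ← sum_sub_distrib, ← mul_sub, qValue_sub, mul_sum]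
  simp only [mul_left_comm (π s _) γ]

lemma norm_bellmanOp_sub_le (hγ0 : 0 ≤ γ)
    (hP0 : ∀ s a s', 0 ≤ P s a s') (hP1 : ∀ s a, ∑ s', P s a s' = 1)
    (hπ0 : ∀ s a, 0 ≤ π s a) (hπ1 : ∀ s, ∑ a, π s a = 1) (V W : S → ℝ) :
    ‖bellmanOp P R γ π V - bellmanOp P R γ π W‖ ≤ γ * ‖V - W‖ := by
  refine (pi_norm_le_iff_of_nonneg (by positivity)).2 fun s => ?_
  rw [bellmanOp_sub, Real.norm_eq_abs, abs_mul, abs_of_nonneg hγ0]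
  refine mul_le_mul_of_nonneg_left ?_ hγ0
  refine (abs_sum_mul_le_norm (hπ0 s) (hπ1 s) _).trans
    ((pi_norm_le_iff_of_nonneg (norm_nonneg _)).2 fun a => ?_)
  rw [Real.norm_eq_abs]
  exact abs_sum_mul_le_norm (hP0 s a) (hP1 s a) _

lemma eq_of_bellmanOp_eq_self (hγ0 : 0 ≤ γ) (hγ1 : γ < 1)
    (hP0 : ∀ s a s', 0 ≤ P s a s') (hP1 : ∀ s a, ∑ s', P s a s' = 1)
    (hπ0 : ∀ s a, 0 ≤ π s a) (hπ1 : ∀ s, ∑ a, π s a = 1) {V W : S → ℝ}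
    (hV : bellmanOp P R γ π V = V) (hW : bellmanOp P R γ π W = W) : V = W := by
  have hcontract := norm_bellmanOp_sub_le (R := R) hγ0 hP0 hP1 hπ0 hπ1 V W
  rw [hV, hW] at hcontract
  have hnorm : ‖V - W‖ = 0 :=
    le_antisymm (by nlinarith [norm_nonneg (V - W)]) (norm_nonneg _)
  exact sub_eq_zero.1 (norm_eq_zero.1 hnorm)

lemma bellmanOp_ite_eq {πe πb : S → A → ℝ} (hπe1 : ∀ s, ∑ a, πe s a = 1)
    (hπb1 : ∀ s, ∑ a, πb s a = 1) {θ : S → Bool} {V : S → ℝ}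
    (hconst : ∀ s, θ s = false → ∀ a a', qValue P R γ V s a = qValue P R γ V s a') :
    bellmanOp P R γ (fun s a => if θ s then πe s a else πb s a) V = bellmanOp P R γ πe V := by
  funext s
  cases hθ : θ s
  · simp only [bellmanOp, hθ, Bool.false_eq_true, if_false]
    exact sum_mul_eq_of_forall_eq (hπb1 s) (hπe1 s) (hconst s hθ)
  · simp only [bellmanOp, hθ, if_true]

end Bellman

theorem composite_policy_value_eq_general {S A : Type*} [Fintype S] [Fintype A]
    (P : S → A → S → ℝ) (R : S → A → ℝ) (γ : ℝ) (hγ0 : 0 ≤ γ) (hγ1 : γ < 1)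
    (hP0 : ∀ s a s', 0 ≤ P s a s') (hP1 : ∀ s a, ∑ s', P s a s' = 1)
    (πe πb : S → A → ℝ)
    (hπe0 : ∀ s a, 0 ≤ πe s a) (hπe1 : ∀ s, ∑ a, πe s a = 1)
    (hπb0 : ∀ s a, 0 ≤ πb s a) (hπb1 : ∀ s, ∑ a, πb s a = 1)
    (θ : S → Bool) (Ve V' : S → ℝ)
    (hVe : ∀ s, Ve s = ∑ a, πe s a * (R s a + γ * ∑ s', P s a s' * Ve s'))
    (hV' : ∀ s, V' s = ∑ a, (if θ s then πe s a else πb s a) *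
        (R s a + γ * ∑ s', P s a s' * V' s'))
    (hconst : ∀ s, θ s = false → ∀ a a',
        (R s a + γ * ∑ s', P s a s' * Ve s')
          = (R s a' + γ * ∑ s', P s a' s' * Ve s')) :
    ∀ s, V' s = Ve s := by
  set π' : S → A → ℝ := fun s a => if θ s then πe s a else πb s a
  have hπ'0 : ∀ s a, 0 ≤ π' s a := fun s a => by
    dsimp only [π']
    cases θ s
    exacts [hπb0 s a, hπe0 s a]
  have hπ'1 : ∀ s, ∑ a, π' s a = 1 := fun s => by
    dsimp only [π']
    cases θ s
    exacts [hπb1 s, hπe1 s]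
  have hV'_fixed : bellmanOp P R γ π' V' = V' := (funext hV').symm
  have hVe_fixed : bellmanOp P R γ π' Ve = Ve :=
    (bellmanOp_ite_eq hπe1 hπb1 hconst).trans (funext hVe).symm
  exact congrFun (eq_of_bellmanOp_eq_self hγ0 hγ1 hP0 hP1 hπ'0 hπ'1 hV'_fixed hVe_fixed)

/-- Composite-policy value equality in a discounted MDP: if the Bellman value
functions `Ve` (for `π_e`) and `V'` (for the composite policy) satisfy their Bellman
equations, and the state-action value `Q^{π_e}(s,·)` is constant in the action for
every irrelevant state (`θ s = false`), then `V' = Ve` everywhere. -/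
theorem composite_policy_value_eq {S A : Type*} [Fintype S] [Fintype A]
    [Nonempty S] [Nonempty A]
    (P : S → A → S → ℝ) (R : S → A → ℝ) (γ : ℝ) (hγ0 : 0 ≤ γ) (hγ1 : γ < 1)
    (hP0 : ∀ s a s', 0 ≤ P s a s') (hP1 : ∀ s a, ∑ s', P s a s' = 1)
    (πe πb : S → A → ℝ)
    (hπe0 : ∀ s a, 0 ≤ πe s a) (hπe1 : ∀ s, ∑ a, πe s a = 1)
    (hπb0 : ∀ s a, 0 ≤ πb s a) (hπb1 : ∀ s, ∑ a, πb s a = 1)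
    (θ : S → Bool) (Ve V' : S → ℝ)
    (hVe : ∀ s, Ve s = ∑ a, πe s a * (R s a + γ * ∑ s', P s a s' * Ve s'))
    (hV' : ∀ s, V' s = ∑ a, (if θ s then πe s a else πb s a) *
        (R s a + γ * ∑ s', P s a s' * V' s'))
    (hconst : ∀ s, θ s = false → ∀ a a',
        (R s a + γ * ∑ s', P s a s' * Ve s')
          = (R s a' + γ * ∑ s', P s a' s' * Ve s')) :
    ∀ s, V' s = Ve s :=
  composite_policy_value_eq_general P R γ hγ0 hγ1 hP0 hP1 πe πb hπe0 hπe1 hπb0 hπb1 θ Ve V' hVe hV'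
    hconst
end

section
/- Let τ = (s_1, a_1, ..., s_T, a_T) be a trajectory of fixed length T in a finite MDP sampled under behavior policy π_b, i.e., with joint probability P(s_1) Π_t π_b(a_t|s_t) P(s_{t+1}|s_t,a_t), and assume π_b(a|s) > 0 for all (s,a). For any mapping θ' : S → {0,1}, the expectation under π_b of the product over t of (π_e(a_t|s_t)/π_b(a_t|s_t))^{1−θ'(s_t)} equals 1. -/
/-!
Multiplying the behaviour weight `π_b(a_t|s_t)` by the included ratio `π_e(a_t|s_t)/π_b(a_t|s_t)`
gives `π_e(a_t|s_t)`, so the integrand is the trajectory probability under the mixed policy that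
follows `π_b` where `θ' = 1` and `π_e` where `θ' = 0`. Any policy induces a probability
distribution on trajectories: summing out the first state-action pair reduces a trajectory of
length `T + 1` to one of length `T` whose initial distribution is `P(·|s_1,a_1)`.
-/

open Finset

/-- The joint probability of a length-`T` trajectory under policy `π`. -/
def trajProb {S A : Type*} (init : S → ℝ) (P : S → A → S → ℝ) (π : S → A → ℝ)
    (T : ℕ) (s : Fin (T + 1) → S) (a : Fin T → A) : ℝ :=
  init (s 0) * ∏ t : Fin T, π (s t.castSucc) (a t) * P (s t.castSucc) (a t) (s t.succ)

theorem Fin.sum_univ_fun_succ {β M : Type*} [Fintype β] [AddCommMonoid M] {n : ℕ}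
    (g : (Fin (n + 1) → β) → M) :
    ∑ f : Fin (n + 1) → β, g f = ∑ x : β, ∑ f : Fin n → β, g (Fin.cons x f) :=
  (Fintype.sum_equiv (Fin.consEquiv fun _ => β) _ _ fun _ => rfl).symm.trans
    (Fintype.sum_prod_type _)

section Trajectory

variable {S A : Type*} (init : S → ℝ) (P : S → A → S → ℝ) (π : S → A → ℝ)

theorem trajProb_cons (T : ℕ) (s₀ : S) (s : Fin (T + 1) → S) (a₀ : A) (a : Fin T → A) :
    trajProb init P π (T + 1) (Fin.cons s₀ s) (Fin.cons a₀ a) =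
      init s₀ * π s₀ a₀ * trajProb (P s₀ a₀) P π T s a := by
  simp only [trajProb, Fin.prod_univ_succ, Fin.castSucc_zero, Fin.cons_zero,
    ← Fin.succ_castSucc, Fin.cons_succ]
  ring

theorem trajProb_mul_prod (w : S → A → ℝ) (T : ℕ) (s : Fin (T + 1) → S) (a : Fin T → A) :
    trajProb init P π T s a * ∏ t : Fin T, w (s t.castSucc) (a t) =
      trajProb init P (fun x b => π x b * w x b) T s a := by
  simp only [trajProb, mul_assoc, ← prod_mul_distrib]
  congr 1
  exact prod_congr rfl fun t _ => by ring

variable [Fintype S] [Fintype A]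

theorem sum_trajProb_eq_sum_init (hP : ∀ s a, ∑ s', P s a s' = 1) (hπ : ∀ s, ∑ a, π s a = 1)
    (T : ℕ) :
    ∑ s : Fin (T + 1) → S, ∑ a : Fin T → A, trajProb init P π T s a = ∑ s, init s := by
  induction T generalizing init with
  | zero => simp [trajProb, Fin.sum_univ_fun_succ (M := ℝ)]
  | succ T ih =>
    calc ∑ s : Fin (T + 2) → S, ∑ a : Fin (T + 1) → A, trajProb init P π (T + 1) s a
        = ∑ s₀, ∑ a₀, init s₀ * π s₀ a₀ *
            ∑ s : Fin (T + 1) → S, ∑ a : Fin T → A, trajProb (P s₀ a₀) P π T s a := by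
          simp only [Fin.sum_univ_fun_succ (β := S) (n := T + 1), Fin.sum_univ_fun_succ (β := A),
            trajProb_cons, mul_sum]
          exact sum_congr rfl fun _ _ => sum_comm
      _ = ∑ s₀, init s₀ := by
          simp only [ih, hP, mul_one, ← mul_sum, hπ]

end Trajectory

theorem expectation_omitted_ratios_eq_one_general {S A : Type*} [Fintype S] [Fintype A] (T : ℕ)
    (init : S → ℝ) (hinit1 : ∑ s, init s = 1)
    (P : S → A → S → ℝ) (hP1 : ∀ s a, ∑ s', P s a s' = 1)
    (πe πb : S → A → ℝ)
    (hπe1 : ∀ s, ∑ a, πe s a = 1)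
    (hπb0 : ∀ s a, 0 < πb s a) (hπb1 : ∀ s, ∑ a, πb s a = 1)
    (θ' : S → Bool) :
    ∑ s : Fin (T + 1) → S, ∑ a : Fin T → A,
        trajProb init P πb T s a *
          ∏ t : Fin T,
            (if θ' (s t.castSucc) then 1
             else πe (s t.castSucc) (a t) / πb (s t.castSucc) (a t))
      = 1 := by
  have hmixed : ∀ x b, (πb x b * if θ' x then 1 else πe x b / πb x b) =
      if θ' x then πb x b else πe x b := fun x b => by
    split_ifs
    · exact mul_one _
    · exact mul_div_cancel₀ _ (hπb0 x b).ne'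
  have hmixed1 : ∀ x, ∑ b, (if θ' x then πb x b else πe x b) = 1 := fun x => by
    split_ifs
    exacts [hπb1 x, hπe1 x]
  simp only [trajProb_mul_prod init P πb (fun x b => if θ' x then 1 else πe x b / πb x b), hmixed]
  rw [sum_trajProb_eq_sum_init init P _ hP1 hmixed1, hinit1]

/-- The expectation under `π_b` of the product of omitted likelihood ratios
(those with exponent `1 - θ'(s_t)`, i.e. the ratio is included exactly when
`θ'(s_t) = 0`) equals 1. -/
theorem expectation_omitted_ratios_eq_one {S A : Type*} [Fintype S] [Fintype A]
    [Nonempty S] [Nonempty A] (T : ℕ)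
    (init : S → ℝ) (hinit0 : ∀ s, 0 ≤ init s) (hinit1 : ∑ s, init s = 1)
    (P : S → A → S → ℝ) (hP0 : ∀ s a s', 0 ≤ P s a s') (hP1 : ∀ s a, ∑ s', P s a s' = 1)
    (πe πb : S → A → ℝ)
    (hπe0 : ∀ s a, 0 ≤ πe s a) (hπe1 : ∀ s, ∑ a, πe s a = 1)
    (hπb0 : ∀ s a, 0 < πb s a) (hπb1 : ∀ s, ∑ a, πb s a = 1)
    (θ' : S → Bool) :
    ∑ s : Fin (T + 1) → S, ∑ a : Fin T → A,
        trajProb init P πb T s a *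
          ∏ t : Fin T,
            (if θ' (s t.castSucc) then 1
             else πe (s t.castSucc) (a t) / πb (s t.castSucc) (a t))
      = 1 :=
  expectation_omitted_ratios_eq_one_general T init hinit1 P hP1 πe πb hπe1 hπb0 hπb1 θ'
end
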